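/- Let f : (0,∞) → ℂ admit an asymptotic expansion f(t) ~ Σ_{k≥0} a_k t^{(k-n-1)/2} as t → 0⁺ and be rapidly decreasing as t → ∞. Then the Mellin transform F(s) = ∫₀^∞ t^{(s-1)/2} f(t) dt, convergent for Re(s) > n, extends meromorphically to ℂ with at most simple poles at s = n - k, k ∈ ℕ, with residue at s = n-k equal to 2 a_k. -/

import Mathlib

/-! Since `F(s) = mellin f ((s + 1) / 2)`, subtract from `f` the first `N + 1` terms of its
expansion, each cut off to `(0, 1]`. The remainder is `O(t^{(N - n)/2})` at `0` and rapidly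
decreasing at `∞`, so its Mellin transform at `(s + 1) / 2` is holomorphic on `Re s > n - N - 1`,
while the `k`-th cut-off term contributes exactly `2 a_k / (s - (n - k))`. These continuations
agree on their common half-planes, and glue to the meromorphic extension. -/

open Complex MeasureTheory Filter Set Asymptotics Topology

namespace MellinMeromorphic

def HasExpansionAtZero (n : ℕ) (f : ℝ → ℂ) (a : ℕ → ℂ) : Prop :=
  ∀ N : ℕ, ∃ C : ℝ, ∀ t ∈ Ioc (0 : ℝ) 1,
    ‖f t - ∑ k ∈ Finset.range (N + 1), a k * (t : ℂ) ^ (((k : ℂ) - n - 1) / 2)‖ ≤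
      C * t ^ (((N : ℝ) - n) / 2)

def RapidDecayAtTop {E : Type*} [Norm E] (f : ℝ → E) : Prop :=
  ∀ m : ℕ, ∃ C : ℝ, ∀ t : ℝ, 1 ≤ t → ‖f t‖ ≤ C * t ^ (-(m : ℝ))

theorem RapidDecayAtTop.isBigO_rpow_neg {E : Type*} [Norm E] {f : ℝ → E}
    (hf : RapidDecayAtTop f) (A : ℝ) : f =O[atTop] fun t : ℝ => t ^ (-A) := by
  obtain ⟨C, hC⟩ := hf ⌈A⌉₊
  refine (IsBigO.of_bound C ?_ : f =O[atTop] fun t : ℝ => t ^ (-(⌈A⌉₊ : ℝ))).trans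
    (Eventually.isBigO ?_)
  · filter_upwards [eventually_ge_atTop 1] with t ht
    rw [Real.norm_of_nonneg (by positivity)]
    exact hC t ht
  · filter_upwards [eventually_ge_atTop 1] with t ht
    rw [Real.norm_of_nonneg (by positivity)]
    exact Real.rpow_le_rpow_of_exponent_le ht (neg_le_neg (Nat.le_ceil A))

/-- The `k`-th term of the expansion, cut off outside `(0, 1]` so that its Mellin transform
exists on a half-plane. -/
noncomputable def expansionTerm (n k : ℕ) : ℝ → ℂ :=
  indicator (Ioc 0 1) fun t => (t : ℂ) ^ (((k : ℂ) - n - 1) / 2)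

noncomputable def remainder (n : ℕ) (f : ℝ → ℂ) (a : ℕ → ℂ) (N : ℕ) : ℝ → ℂ :=
  fun t => f t - ∑ k ∈ Finset.range (N + 1), a k • expansionTerm n k t

/-- Holomorphic on `n - N - 1 < Re s` away from the poles `n - k`, `k ≤ N`. -/
noncomputable def continuation (n : ℕ) (f : ℝ → ℂ) (a : ℕ → ℂ) (N : ℕ) (s : ℂ) : ℂ :=
  mellin (remainder n f a N) ((s + 1) / 2) +
    ∑ k ∈ Finset.range (N + 1), 2 * a k / (s - ((n : ℂ) - k))

noncomputable def extension (n : ℕ) (f : ℝ → ℂ) (a : ℕ → ℂ) (s : ℂ) : ℂ :=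
  continuation n f a ⌈(n : ℝ) - s.re⌉₊ s

theorem hasMellin_expansionTerm {n k : ℕ} {s : ℂ} (hs : (n : ℝ) - k < s.re) :
    HasMellin (expansionTerm n k) ((s + 1) / 2) (2 / (s - ((n : ℂ) - k))) := by
  have hval : 2 / (s - ((n : ℂ) - k)) = 1 / ((s + 1) / 2 + ((k : ℂ) - n - 1) / 2) := by
    rw [show (s + 1) / 2 + ((k : ℂ) - n - 1) / 2 = (s - ((n : ℂ) - k)) / 2 by ring, one_div_div]
  rw [hval]
  exact hasMellin_cpow_Ioc _ (by simp; linarith)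

theorem locallyIntegrableOn_expansionTerm (n k : ℕ) :
    LocallyIntegrableOn (expansionTerm n k) (Ioi 0) := by
  rw [locallyIntegrableOn_iff isOpen_Ioi.isLocallyClosed]
  intro K hK hKc
  have hcont : ContinuousOn (fun t : ℝ => (t : ℂ) ^ (((k : ℂ) - n - 1) / 2)) K := fun t ht =>
    (continuousAt_ofReal_cpow_const _ _ (Or.inr (hK ht).ne')).continuousWithinAt
  exact (hcont.integrableOn_compact hKc).indicator measurableSet_Ioc

theorem hasMellin_add_smul_expansionTerm {n k : ℕ} {g : ℝ → ℂ} {s : ℂ} (c : ℂ)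
    (hg : MellinConvergent g ((s + 1) / 2)) (hs : (n : ℝ) - k < s.re) :
    HasMellin (fun t => g t + c • expansionTerm n k t) ((s + 1) / 2)
      (mellin g ((s + 1) / 2) + 2 * c / (s - ((n : ℂ) - k))) := by
  have hterm := hasMellin_expansionTerm hs
  convert hasMellin_add hg (hterm.1.const_smul c) using 1
  rw [mellin_const_smul, hterm.2, smul_eq_mul, mul_div_assoc']
  ring

theorem analyticAt_sum_div_sub {ι : Type*} (S : Finset ι) (c p : ι → ℂ) {s₀ : ℂ}
    (hp : ∀ j ∈ S, s₀ ≠ p j) : AnalyticAt ℂ (fun s => ∑ j ∈ S, c j / (s - p j)) s₀ :=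
  Finset.analyticAt_fun_sum _ fun j hj =>
    analyticAt_const.div (analyticAt_id.sub analyticAt_const) (sub_ne_zero.mpr (hp j hj))

theorem tendsto_sub_mul_div_sub_add {g : ℂ → ℂ} {p : ℂ} (c : ℂ) (hg : ContinuousAt g p) :
    Tendsto (fun s => (s - p) * (c / (s - p) + g s)) (𝓝[≠] p) (𝓝 c) := by
  have hlim : Tendsto (fun s => c + (s - p) * g s) (𝓝 p) (𝓝 (c + (p - p) * g p)) :=
    tendsto_const_nhds.add ((continuousAt_id.sub continuousAt_const).mul hg)
  rw [sub_self, zero_mul, add_zero] at hlim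
  refine (hlim.mono_left nhdsWithin_le_nhds).congr' ?_
  filter_upwards [self_mem_nhdsWithin] with s (hs : s ≠ p)
  rw [mul_add, mul_div_cancel₀ _ (sub_ne_zero.mpr hs)]

section

variable {n : ℕ} {f : ℝ → ℂ} {a : ℕ → ℂ}

theorem remainder_isBigO_atTop (hdec : RapidDecayAtTop f) (N : ℕ) (A : ℝ) :
    remainder n f a N =O[atTop] fun t : ℝ => t ^ (-A) := by
  refine (hdec.isBigO_rpow_neg A).congr' ?_ EventuallyEq.rfl
  filter_upwards [eventually_gt_atTop 1] with t ht
  simp [remainder, expansionTerm, indicator_of_notMem fun h : t ∈ Ioc 0 1 => ht.not_ge h.2]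

theorem remainder_isBigO_nhdsGT_zero (hexp : HasExpansionAtZero n f a) (N : ℕ) :
    remainder n f a N =O[𝓝[>] 0] fun t : ℝ => t ^ (-(((n : ℝ) - N) / 2)) := by
  obtain ⟨C, hC⟩ := hexp N
  refine IsBigO.of_bound C ?_
  filter_upwards [Ioc_mem_nhdsGT zero_lt_one] with t ht
  rw [Real.norm_of_nonneg (Real.rpow_nonneg ht.1.le _), ← neg_div, neg_sub]
  simpa [remainder, expansionTerm, indicator_of_mem ht] using hC t ht

theorem locallyIntegrableOn_remainder (hf : ContinuousOn f (Ioi 0)) (N : ℕ) :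
    LocallyIntegrableOn (remainder n f a N) (Ioi 0) := by
  refine (hf.locallyIntegrableOn measurableSet_Ioi).sub ?_
  rw [locallyIntegrableOn_iff isOpen_Ioi.isLocallyClosed]
  intro K hK hKc
  exact integrable_finsetSum _ fun k _ =>
    ((locallyIntegrableOn_expansionTerm n k).integrableOn_compact_subset hK hKc).smul (a k)

theorem mellinConvergent_remainder (hf : ContinuousOn f (Ioi 0))
    (hexp : HasExpansionAtZero n f a) (hdec : RapidDecayAtTop f) {N : ℕ} {s : ℂ}
    (hs : (n : ℝ) - N - 1 < s.re) : MellinConvergent (remainder n f a N) ((s + 1) / 2) :=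
  mellinConvergent_of_isBigO_rpow (locallyIntegrableOn_remainder hf N)
    (remainder_isBigO_atTop hdec N _) (lt_add_one _) (remainder_isBigO_nhdsGT_zero hexp N)
    (by simp; linarith)

theorem analyticAt_mellin_remainder (hf : ContinuousOn f (Ioi 0))
    (hexp : HasExpansionAtZero n f a) (hdec : RapidDecayAtTop f) {N : ℕ} {s₀ : ℂ}
    (hs₀ : (n : ℝ) - N - 1 < s₀.re) :
    AnalyticAt ℂ (fun s => mellin (remainder n f a N) ((s + 1) / 2)) s₀ := by
  refine DifferentiableOn.analyticAt (s := {s | (n : ℝ) - N - 1 < s.re}) (fun s hs => ?_)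
    ((isOpen_lt continuous_const continuous_re).mem_nhds hs₀)
  have hmellin : DifferentiableAt ℂ (mellin (remainder n f a N)) ((s + 1) / 2) :=
    mellin_differentiableAt_of_isBigO_rpow (locallyIntegrableOn_remainder hf N)
      (remainder_isBigO_atTop hdec N _) (lt_add_one _) (remainder_isBigO_nhdsGT_zero hexp N)
      (by have hs : (n : ℝ) - N - 1 < s.re := hs; simp; linarith)
  exact (hmellin.comp (f := fun s : ℂ => (s + 1) / 2) s
    ((differentiableAt_id.add_const 1).div_const 2)).differentiableWithinAt

theorem continuation_succ (hf : ContinuousOn f (Ioi 0)) (hexp : HasExpansionAtZero n f a)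
    (hdec : RapidDecayAtTop f) {N : ℕ} {s : ℂ} (hs : (n : ℝ) - N - 1 < s.re) :
    continuation n f a (N + 1) s = continuation n f a N s := by
  have hsplit : remainder n f a N =
      fun t => remainder n f a (N + 1) t + a (N + 1) • expansionTerm n (N + 1) t := by
    funext t
    simp only [remainder, Finset.sum_range_succ]
    ring
  have hmellin := hasMellin_add_smul_expansionTerm (n := n) (k := N + 1) (a (N + 1))
    (mellinConvergent_remainder hf hexp hdec (N := N + 1) (by push_cast; linarith))
    (by push_cast; linarith)
  rw [← hsplit] at hmellin
  rw [continuation, continuation, hmellin.2, Finset.sum_range_succ _ (N + 1)]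
  ring

theorem continuation_eq_of_le (hf : ContinuousOn f (Ioi 0)) (hexp : HasExpansionAtZero n f a)
    (hdec : RapidDecayAtTop f) {N M : ℕ} (hNM : N ≤ M) {s : ℂ}
    (hs : (n : ℝ) - N - 1 < s.re) : continuation n f a M s = continuation n f a N s := by
  induction M, hNM using Nat.le_induction with
  | base => rfl
  | succ M hNM ih =>
    have hM : (N : ℝ) ≤ M := by exact_mod_cast hNM
    rw [continuation_succ hf hexp hdec (by linarith), ih]

theorem hasMellin_continuation_zero (hf : ContinuousOn f (Ioi 0))
    (hexp : HasExpansionAtZero n f a) (hdec : RapidDecayAtTop f) {s : ℂ} (hs : (n : ℝ) < s.re) :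
    HasMellin f ((s + 1) / 2) (continuation n f a 0 s) := by
  have hsplit : f = fun t => remainder n f a 0 t + a 0 • expansionTerm n 0 t := by
    funext t
    simp [remainder]
  have hmellin := hasMellin_add_smul_expansionTerm (n := n) (k := 0) (a 0)
    (mellinConvergent_remainder hf hexp hdec (N := 0) (by simp; linarith)) (by simpa using hs)
  rw [← hsplit] at hmellin
  simpa [continuation] using hmellin

theorem extension_eq_continuation (hf : ContinuousOn f (Ioi 0))
    (hexp : HasExpansionAtZero n f a) (hdec : RapidDecayAtTop f) {M : ℕ} {s : ℂ}
    (hs : (n : ℝ) - M < s.re) : extension n f a s = continuation n f a M s :=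
  (continuation_eq_of_le hf hexp hdec (Nat.ceil_le.mpr (by linarith))
    (by linarith [Nat.le_ceil ((n : ℝ) - s.re)])).symm

theorem extension_eventuallyEq_continuation (hf : ContinuousOn f (Ioi 0))
    (hexp : HasExpansionAtZero n f a) (hdec : RapidDecayAtTop f) {M : ℕ} {s₀ : ℂ}
    (hs₀ : (n : ℝ) - M < s₀.re) : extension n f a =ᶠ[𝓝 s₀] continuation n f a M := by
  filter_upwards [(isOpen_lt continuous_const continuous_re).mem_nhds hs₀] with s hs
  exact extension_eq_continuation hf hexp hdec hs

theorem analyticAt_continuation (hf : ContinuousOn f (Ioi 0))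
    (hexp : HasExpansionAtZero n f a) (hdec : RapidDecayAtTop f) {N : ℕ} {s₀ : ℂ}
    (hs₀ : (n : ℝ) - N - 1 < s₀.re) (hpole : ∀ k ∈ Finset.range (N + 1), s₀ ≠ (n : ℂ) - k) :
    AnalyticAt ℂ (continuation n f a N) s₀ :=
  (analyticAt_mellin_remainder hf hexp hdec hs₀).add (analyticAt_sum_div_sub _ _ _ hpole)

theorem tendsto_sub_mul_continuation (hf : ContinuousOn f (Ioi 0))
    (hexp : HasExpansionAtZero n f a) (hdec : RapidDecayAtTop f) {N k : ℕ} (hk : k ≤ N) :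
    Tendsto (fun s => (s - ((n : ℂ) - k)) * continuation n f a N s) (𝓝[≠] ((n : ℂ) - k))
      (𝓝 (2 * a k)) := by
  classical
  have hkN : (k : ℝ) ≤ N := by exact_mod_cast hk
  set regular := fun s : ℂ => mellin (remainder n f a N) ((s + 1) / 2) +
    ∑ j ∈ (Finset.range (N + 1)).erase k, 2 * a j / (s - ((n : ℂ) - j))
  have hregular : AnalyticAt ℂ regular ((n : ℂ) - k) := by
    refine (analyticAt_mellin_remainder hf hexp hdec (by simp; linarith)).add
      (analyticAt_sum_div_sub _ _ _ fun j hj h => Finset.ne_of_mem_erase hj ?_)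
    exact_mod_cast (sub_right_inj.mp h).symm
  have hsplit : continuation n f a N = fun s => 2 * a k / (s - ((n : ℂ) - k)) + regular s := by
    funext s
    rw [continuation, ← Finset.add_sum_erase _ _ (Finset.mem_range_succ_iff.mpr hk)]
    ring
  rw [hsplit]
  exact tendsto_sub_mul_div_sub_add _ hregular.continuousAt

end

end MellinMeromorphic

open MellinMeromorphic in
theorem mellin_meromorphic_extension_general
    (n : ℕ) (f : ℝ → ℂ) (hf : ContinuousOn f (Ioi 0))
    (a : ℕ → ℂ)
    (hexp : ∀ N : ℕ, ∃ C : ℝ, ∀ t ∈ Ioc (0 : ℝ) 1,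
      ‖f t - ∑ k ∈ Finset.range (N + 1),
          a k * (t : ℂ) ^ (((k : ℂ) - n - 1) / 2)‖ ≤
        C * t ^ (((N : ℝ) - n) / 2))
    (hdec : ∀ m : ℕ, ∃ C : ℝ, ∀ t : ℝ, 1 ≤ t → ‖f t‖ ≤ C * t ^ (-(m : ℝ))) :
    ∃ F : ℂ → ℂ,
      (∀ s : ℂ, (n : ℝ) < s.re →
        IntegrableOn (fun t : ℝ => (t : ℂ) ^ ((s - 1) / 2) * f t) (Ioi 0) ∧
        F s = ∫ t in Ioi (0 : ℝ), (t : ℂ) ^ ((s - 1) / 2) * f t) ∧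
      (∀ s₀ : ℂ, (∀ k : ℕ, s₀ ≠ (n : ℂ) - k) → AnalyticAt ℂ F s₀) ∧
      (∀ k : ℕ,
        Tendsto (fun s : ℂ => (s - ((n : ℂ) - k)) * F s)
          (nhdsWithin ((n : ℂ) - k) {s | s ≠ (n : ℂ) - k})
          (nhds (2 * a k))) := by
  refine ⟨extension n f a, fun s hs => ?_, fun s₀ hs₀ => ?_, fun k => ?_⟩
  · obtain ⟨hconv, hval⟩ := hasMellin_continuation_zero hf hexp hdec hs
    have hexponent : (s + 1) / 2 - 1 = (s - 1) / 2 := by ring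
    simp only [MellinConvergent, mellin, hexponent, smul_eq_mul] at hconv hval
    rw [extension_eq_continuation hf hexp hdec (M := 0) (by simpa using hs), hval]
    exact ⟨hconv, rfl⟩
  · have hM : (n : ℝ) - (⌈(n : ℝ) - s₀.re⌉₊ + 1 : ℕ) < s₀.re := by
      push_cast
      linarith [Nat.le_ceil ((n : ℝ) - s₀.re)]
    exact (analyticAt_continuation hf hexp hdec (by linarith) fun k _ => hs₀ k).congr
      (extension_eventuallyEq_continuation hf hexp hdec hM).symm
  · have hM : (n : ℝ) - (k + 1 : ℕ) < ((n : ℂ) - k).re := by simp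
    refine (tendsto_sub_mul_continuation hf hexp hdec k.le_succ).congr' ?_
    filter_upwards [nhdsWithin_le_nhds (extension_eventuallyEq_continuation hf hexp hdec hM)]
      with s hs
    rw [hs]

/-- Meromorphic extension of a Mellin-type transform: if `f` has an asymptotic
expansion `f(t) ~ Σ a_k t^{(k-n-1)/2}` at `t → 0⁺` and is rapidly decreasing
at `∞`, then `F(s) = ∫₀^∞ t^{(s-1)/2} f(t) dt` (convergent for `Re s > n`)
extends meromorphically to `ℂ` with at most simple poles at `s = n - k`,
`k ∈ ℕ`, with residue `2 a_k` at `s = n - k`. -/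
theorem mellin_meromorphic_extension
    (n : ℕ) (hn : 0 < n) (f : ℝ → ℂ) (hf : ContinuousOn f (Ioi 0))
    (a : ℕ → ℂ)
    (hexp : ∀ N : ℕ, ∃ C : ℝ, ∀ t ∈ Ioc (0 : ℝ) 1,
      ‖f t - ∑ k ∈ Finset.range (N + 1),
          a k * (t : ℂ) ^ (((k : ℂ) - n - 1) / 2)‖ ≤
        C * t ^ (((N : ℝ) - n) / 2))
    (hdec : ∀ m : ℕ, ∃ C : ℝ, ∀ t : ℝ, 1 ≤ t → ‖f t‖ ≤ C * t ^ (-(m : ℝ))) :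
    ∃ F : ℂ → ℂ,
      (∀ s : ℂ, (n : ℝ) < s.re →
        IntegrableOn (fun t : ℝ => (t : ℂ) ^ ((s - 1) / 2) * f t) (Ioi 0) ∧
        F s = ∫ t in Ioi (0 : ℝ), (t : ℂ) ^ ((s - 1) / 2) * f t) ∧
      (∀ s₀ : ℂ, (∀ k : ℕ, s₀ ≠ (n : ℂ) - k) → AnalyticAt ℂ F s₀) ∧
      (∀ k : ℕ,
        Tendsto (fun s : ℂ => (s - ((n : ℂ) - k)) * F s)
          (nhdsWithin ((n : ℂ) - k) {s | s ≠ (n : ℂ) - k})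
          (nhds (2 * a k))) :=
  mellin_meromorphic_extension_general n f hf a hexp hdec
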